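/- For every positive integer n and every t ∈ [0, n], the volume of the truncated cube satisfies V_n(t) = (1/n!) Σ_{k=0}^{n} C(n,k) (−1)^k (t−k)^n 𝟙{t ≥ k}, where 𝟙{t ≥ k} equals 1 if t − k ≥ 0 and 0 otherwise. -/

import Mathlib

/-!
Slicing off the first coordinate gives `V_{n+1}(t) = ∫₀¹ V_n(t - y) dy`, with `V_0` the Heaviside
function. The right-hand side is `∇ⁿ(t₊ⁿ)/n!`, where `∇` is the backward difference of step `1`;
it satisfies the same recursion, because averaging over a window of length one commutes with `∇`
and turns `t₊ⁿ` into `∇ t₊ⁿ⁺¹ / (n + 1)`.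
-/

open MeasureTheory

/-- The truncated cube `𝒯_n(t) = {x ∈ [0,1]^n : ∑ i, x i ≤ t}`. -/
def truncCube (n : ℕ) (t : ℝ) : Set (Fin n → ℝ) :=
  {x | (∀ i, x i ∈ Set.Icc (0 : ℝ) 1) ∧ ∑ i, x i ≤ t}

/-- Volume of the truncated cube. -/
noncomputable def truncVol (n : ℕ) (t : ℝ) : ℝ :=
  (volume (truncCube n t)).toReal

open Set

/-- `s₊ⁿ`, with the convention that `truncPow 0` is the Heaviside step (equal to `1` at `0`). -/
noncomputable def truncPow (n : ℕ) (s : ℝ) : ℝ := if 0 ≤ s then s ^ n else 0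

lemma truncPow_mono (n : ℕ) : Monotone (truncPow n) := by
  intro a b hab
  unfold truncPow
  split_ifs with ha hb hb
  · exact pow_le_pow_left₀ ha hab n
  · exact absurd (ha.trans hab) hb
  · positivity
  · rfl

lemma continuous_truncPow_succ (n : ℕ) : Continuous (truncPow (n + 1)) := by
  have : truncPow (n + 1) = fun s => max s 0 ^ (n + 1) := by
    funext s
    unfold truncPow
    split_ifs with hs
    · rw [max_eq_left hs]
    · rw [max_eq_right (not_le.1 hs).le, zero_pow n.succ_ne_zero]
  rw [this]
  fun_prop

lemma hasDerivWithinAt_truncPow_succ (n : ℕ) (x : ℝ) :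
    HasDerivWithinAt (truncPow (n + 1)) ((n + 1) * truncPow n x) (Ici x) x := by
  rcases lt_or_ge x 0 with hx | hx
  · have hzero : truncPow (n + 1) =ᶠ[nhds x] fun _ => 0 := by
      filter_upwards [Iio_mem_nhds hx] with s hs
      exact if_neg (not_le.2 hs)
    simpa [truncPow, not_le.2 hx] using
      ((hasDerivAt_const x (0 : ℝ)).congr_of_eventuallyEq hzero).hasDerivWithinAt
  · have hpow := (hasDerivAt_pow (n + 1) x).hasDerivWithinAt (s := Ici x)
    refine (hpow.congr (f₁ := truncPow (n + 1)) (fun s hs => if_pos (hx.trans hs))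
      (if_pos hx)).congr_deriv ?_
    simp [truncPow, hx]

lemma integral_truncPow (n : ℕ) {a b : ℝ} (hab : a ≤ b) :
    ∫ s in a..b, truncPow n s = (truncPow (n + 1) b - truncPow (n + 1) a) / (n + 1) := by
  rw [eq_div_iff (by positivity), ← intervalIntegral.integral_mul_const]
  refine intervalIntegral.integral_eq_sub_of_hasDeriv_right_of_le hab
    (continuous_truncPow_succ n).continuousOn (fun x _ => ?_)
    ((truncPow_mono n).intervalIntegrable.mul_const _)
  rw [mul_comm]
  exact (hasDerivWithinAt_truncPow_succ n x).mono Ioi_subset_Ici_self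

lemma sum_range_choose_mul_neg_one_pow_succ {R : Type*} [CommRing R] (n : ℕ) (g : ℕ → R) :
    ∑ k ∈ Finset.range (n + 2), ((n + 1).choose k : R) * (-1) ^ k * g k =
      ∑ k ∈ Finset.range (n + 1), (n.choose k : R) * (-1) ^ k * (g k - g (k + 1)) := by
  have htop : ∑ k ∈ Finset.range (n + 1), (n.choose k : R) * (-1) ^ k * g k =
      ∑ k ∈ Finset.range (n + 2), (n.choose k : R) * (-1) ^ k * g k := by
    simp [Finset.sum_range_succ _ (n + 1)]
  simp only [mul_sub, Finset.sum_sub_distrib]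
  rw [htop, Finset.sum_range_succ', Finset.sum_range_succ' _ (n + 1)]
  simp only [Nat.choose_succ_succ', Nat.cast_add, add_mul, Finset.sum_add_distrib, pow_succ,
    mul_neg, mul_one, neg_mul, Finset.sum_neg_distrib, Nat.choose_zero_right, Nat.cast_one,
    pow_zero, one_mul]
  ring

/-- The Irwin–Hall distribution function: the law of a sum of `n` independent uniform variables
on `[0, 1]`. -/
noncomputable def irwinHallCDF (n : ℕ) (t : ℝ) : ℝ :=
  (n.factorial : ℝ)⁻¹ *
    ∑ k ∈ Finset.range (n + 1), (n.choose k : ℝ) * (-1) ^ k * truncPow n (t - k)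

lemma integral_irwinHallCDF_sub (n : ℕ) (t : ℝ) :
    ∫ y in (0 : ℝ)..1, irwinHallCDF n (t - y) = irwinHallCDF (n + 1) t := by
  have hint (k : ℕ) : IntervalIntegrable (fun s => truncPow n (s - k)) volume (t - 1) t :=
    ((truncPow_mono n).comp fun _ _ h => sub_le_sub_right h _).intervalIntegrable
  have hfac : ((n + 1).factorial : ℝ) = (n + 1) * n.factorial := by
    push_cast [Nat.factorial_succ]; ring
  calc ∫ y in (0 : ℝ)..1, irwinHallCDF n (t - y)
      = ∫ s in (t - 1)..t, irwinHallCDF n s := by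
        rw [intervalIntegral.integral_comp_sub_left, sub_zero]
    _ = (n.factorial : ℝ)⁻¹ * ∑ k ∈ Finset.range (n + 1),
          (n.choose k : ℝ) * (-1) ^ k * ∫ s in (t - 1)..t, truncPow n (s - k) := by
        simp only [irwinHallCDF, intervalIntegral.integral_const_mul]
        rw [intervalIntegral.integral_finsetSum fun k _ => (hint k).const_mul _]
        simp only [intervalIntegral.integral_const_mul]
    _ = (n.factorial : ℝ)⁻¹ * ∑ k ∈ Finset.range (n + 1), (n.choose k : ℝ) * (-1) ^ k *
          ((truncPow (n + 1) (t - k) - truncPow (n + 1) (t - ↑(k + 1))) / (n + 1)) := by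
        refine congrArg _ (Finset.sum_congr rfl fun k _ => ?_)
        rw [intervalIntegral.integral_comp_sub_right, integral_truncPow n (by linarith)]
        push_cast
        ring_nf
    _ = irwinHallCDF (n + 1) t := by
        rw [irwinHallCDF, sum_range_choose_mul_neg_one_pow_succ n fun k => truncPow (n + 1) (t - k),
          hfac, Finset.mul_sum, Finset.mul_sum]
        refine Finset.sum_congr rfl fun k _ => ?_
        field_simp

lemma truncCube_eq (n : ℕ) (t : ℝ) :
    truncCube n t = Icc 0 1 ∩ {x | ∑ i, x i ≤ t} := by
  ext x
  simp [truncCube, Pi.le_def, forall_and]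

lemma measurableSet_truncCube (n : ℕ) (t : ℝ) : MeasurableSet (truncCube n t) := by
  rw [truncCube_eq]
  exact measurableSet_Icc.inter (measurableSet_le (by fun_prop) (by fun_prop))

lemma truncCube_mono (n : ℕ) : Monotone (truncCube n) :=
  fun _ _ hst _ hx => ⟨hx.1, hx.2.trans hst⟩

lemma volume_truncCube_ne_top (n : ℕ) (t : ℝ) : volume (truncCube n t) ≠ ⊤ := by
  rw [truncCube_eq]
  refine ne_top_of_le_ne_top ?_ (measure_mono inter_subset_left)
  simp [Real.volume_Icc_pi]

lemma cons_mem_truncCube_succ {n : ℕ} {t y : ℝ} {z : Fin n → ℝ} :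
    Fin.cons y z ∈ truncCube (n + 1) t ↔ y ∈ Icc 0 1 ∧ z ∈ truncCube n (t - y) := by
  simp only [truncCube, mem_ofPred_eq, Fin.forall_fin_succ, Fin.cons_zero, Fin.cons_succ,
    Fin.sum_cons, le_sub_iff_add_le', and_assoc]

lemma volume_truncCube_succ (n : ℕ) (t : ℝ) :
    volume (truncCube (n + 1) t) = ∫⁻ y in Icc 0 1, volume (truncCube n (t - y)) := by
  have hmp := (volume_preserving_piFinSuccAbove (fun _ : Fin (n + 1) => ℝ) 0).symm
  have hS := measurableSet_truncCube (n + 1) t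
  rw [← hmp.measure_preimage hS.nullMeasurableSet, Measure.volume_eq_prod,
    Measure.prod_apply (hmp.measurable hS), ← lintegral_indicator measurableSet_Icc]
  congr 1 with y
  have hfiber : Prod.mk y ⁻¹' ((MeasurableEquiv.piFinSuccAbove (fun _ => ℝ) 0).symm ⁻¹'
      truncCube (n + 1) t) = {z | y ∈ Icc 0 1 ∧ z ∈ truncCube n (t - y)} :=
    ext fun _ => by
      simp only [mem_preimage, MeasurableEquiv.piFinSuccAbove_symm_apply, Fin.insertNthEquiv_zero]
      exact cons_mem_truncCube_succ
  rw [hfiber]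
  by_cases hy : y ∈ Icc (0 : ℝ) 1 <;> simp [hy]

lemma truncVol_succ (n : ℕ) (t : ℝ) :
    truncVol (n + 1) t = ∫ y in (0 : ℝ)..1, truncVol n (t - y) := by
  have hmeas : Measurable fun y => volume (truncCube n (t - y)) :=
    Antitone.measurable fun _ _ hy => measure_mono (truncCube_mono n (by linarith))
  rw [intervalIntegral.integral_of_le zero_le_one, ← integral_Icc_eq_integral_Ioc, truncVol,
    volume_truncCube_succ, ← integral_toReal hmeas.aemeasurable
      (ae_of_all _ fun y => (volume_truncCube_ne_top n (t - y)).lt_top)]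
  rfl

lemma truncVol_zero (t : ℝ) : truncVol 0 t = if 0 ≤ t then 1 else 0 := by
  by_cases ht : 0 ≤ t <;> simp [truncVol, truncCube, ht, volume_pi]

lemma truncVol_eq_irwinHallCDF (n : ℕ) (t : ℝ) : truncVol n t = irwinHallCDF n t := by
  induction n generalizing t with
  | zero => simp [truncVol_zero, irwinHallCDF, truncPow]
  | succ n ih => simp only [truncVol_succ, ih, integral_irwinHallCDF_sub]

theorem truncCube_volume_formula_general (n : ℕ) (t : ℝ) :
    truncVol n t =
      (1 / (n.factorial : ℝ)) *
        ∑ k ∈ Finset.range (n + 1),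
          (n.choose k : ℝ) * (-1) ^ k * (t - k) ^ n *
            (if 0 ≤ t - (k : ℝ) then 1 else 0) := by
  rw [truncVol_eq_irwinHallCDF, irwinHallCDF, one_div]
  refine congrArg _ (Finset.sum_congr rfl fun k _ => ?_)
  rw [truncPow]
  split_ifs <;> ring

theorem truncCube_volume_formula (n : ℕ) (hn : 0 < n) (t : ℝ)
    (ht : t ∈ Set.Icc (0 : ℝ) n) :
    truncVol n t =
      (1 / (n.factorial : ℝ)) *
        ∑ k ∈ Finset.range (n + 1),
          (n.choose k : ℝ) * (-1) ^ k * (t - k) ^ n *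
            (if 0 ≤ t - (k : ℝ) then 1 else 0) :=
  truncCube_volume_formula_general n t
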